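/- arXiv:2205.06375 — 3 statements merged into one kernel-verified Lean document; each statement's English description precedes it below -/
import Mathlib

section
/- For every natural number n, the number of area sequences of size n equals the Catalan number C_n = (1/(n+1))·binomial(2n, n). -/
/-- The `i`-th letter of the word `w` (`1`-indexed, as in the paper);
defaults to `0` out of range. -/
def get1 (w : List ℕ) (i : ℕ) : ℕ := w.getD (i - 1) 0

/-- `w` is the area sequence of a Dyck path: the first letter is `0` and each
letter exceeds the previous one by at most one. -/
def IsAreaSeq (w : List ℕ) : Prop :=
  (w ≠ [] → get1 w 1 = 0) ∧ ∀ i, 1 ≤ i → i < w.length → get1 w (i + 1) ≤ get1 w i + 1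

/-- Insertion at position `i` (for `0 ≤ i ≤ n`): `ins w 0` prepends a `0`, and
for `1 ≤ i ≤ n`, `ins w i` inserts the letter `w_i + 1` just after position `i`. -/
def ins (w : List ℕ) (i : ℕ) : List ℕ :=
  w.take i ++ (if i = 0 then 0 else get1 w i + 1) :: w.drop i

/-- The area statistic: the sum of the letters. -/
def area (w : List ℕ) : ℕ := w.sum

/-- The dinv statistic: `dinv w = Σ_i d_i` where `d_i` is the number of `j > i`
with `w_j = w_i` or `w_j = w_i - 1`. -/
def dinv (w : List ℕ) : ℕ :=
  ∑ i ∈ Finset.Icc 1 w.length,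
    ((Finset.Ioc i w.length).filter
      (fun j => get1 w j = get1 w i ∨ get1 w j + 1 = get1 w i)).card

/-- The maximal value of a word (`0` for the empty word). -/
def maxVal (w : List ℕ) : ℕ := w.foldr max 0

/-- Positions of the letters of maximal value `m`. -/
def Maxb (w : List ℕ) : Finset ℕ :=
  (Finset.Icc 1 w.length).filter (fun i => get1 w i = maxVal w)

/-- Positions `i` with `w_i = m - 1` such that all letters after position `i`
are `< m`. -/
def Maxa (w : List ℕ) : Finset ℕ :=
  (Finset.Icc 1 w.length).filter (fun i =>
    get1 w i + 1 = maxVal w ∧ ∀ j ∈ Finset.Ioc i w.length, get1 w j < maxVal w)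

/-- The position of the leftmost letter equal to the maximal value `m` in the
rightmost block of consecutive letters equal to `m`. -/
def i0 (w : List ℕ) : ℕ :=
  ((Finset.Icc 1 w.length).filter (fun i =>
    get1 w i = maxVal w ∧ (i = 1 ∨ get1 w (i - 1) ≠ maxVal w))).sup id

/-- The admissible insertion positions of `w`, listed in admissible order:
the elements of `Maxb w` in decreasing order, then the elements of `Maxa w`
in decreasing order, then `i0 w - 1`.  The empty word has the single
admissible insertion position `0`. -/
def admissible (w : List ℕ) : List ℕ :=
  if w = [] then [0]
  else ((Maxb w).sort (· ≤ ·)).reverse ++ ((Maxa w).sort (· ≤ ·)).reverse ++ [i0 w - 1]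

/-- Auxiliary version of the map `ψ`, reading the reversed word. -/
def psiRev : List ℕ → List ℕ
  | [] => []
  | a :: u => ins (psiRev u) ((admissible (psiRev u)).getD a 0)

/-- The map `ψ`: `ψ(ε) = ε` and `ψ(u a) = ins_{c_a}(ψ(u))` where
`c_0, c_1, …, c_k` are the admissible insertion positions of `ψ(u)` in
admissible order. -/
def psi (w : List ℕ) : List ℕ := psiRev w.reverse

/-- The bounce sequence: `b_1 = 0`, and `b_i = b_{i-1} + 1` if
`b_{i-1} + 1 ≤ w_i`, otherwise `b_i = 0`. -/
def bseq (w : List ℕ) : ℕ → ℕ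
  | 0 => 0
  | 1 => 0
  | (i + 2) => if bseq w (i + 1) + 1 ≤ get1 w (i + 2) then bseq w (i + 1) + 1 else 0

/-- The bounces of `w`: positions `1 < i ≤ n` with `b_i = 0`. -/
def bounces (w : List ℕ) : Finset ℕ :=
  (Finset.Icc 2 w.length).filter (fun i => bseq w i = 0)

/-- The bounce statistic: the sum of the reversed positions `n - i + 1` of the
bounces of `w`. -/
def bounce (w : List ℕ) : ℕ := ∑ i ∈ bounces w, (w.length - i + 1)

/-!
First-return decomposition: a nonempty area sequence factors uniquely as `0 (u + 1) v`, where
`u` and `v` are area sequences and `u + 1` adds one to every letter of `u` (the block `u + 1`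
ends just before the first letter `0` after the initial one). Hence the numbers of area
sequences satisfy the Catalan recurrence `C (n + 1) = ∑ i ≤ n, C i * C (n - i)`.
-/

abbrev AreaSeq (n : ℕ) := {w : List ℕ // IsAreaSeq w ∧ w.length = n}

lemma isAreaSeq_iff_isChain (w : List ℕ) :
    IsAreaSeq w ↔ w.headI = 0 ∧ w.IsChain (fun a b => b ≤ a + 1) := by
  rw [List.isChain_iff_getElem]
  refine and_congr ?_ ⟨fun h i hi => ?_, fun h i hi hlen => ?_⟩
  · cases w <;> simp [get1]
  · simpa [get1, List.getD_eq_getElem, hi, Nat.lt_of_succ_lt hi] using h (i + 1) (by omega) hi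
  · obtain ⟨k, rfl⟩ : ∃ k, i = k + 1 := ⟨i - 1, by omega⟩
    simpa [get1, List.getD_eq_getElem, hlen, Nat.lt_of_succ_lt hlen] using h k hlen

lemma IsAreaSeq.headI_eq_zero {w : List ℕ} (hw : IsAreaSeq w) : w.headI = 0 :=
  ((isAreaSeq_iff_isChain w).1 hw).1

def areaJoin (u v : List ℕ) : List ℕ := 0 :: (u.map (· + 1) ++ v)

lemma length_areaJoin (u v : List ℕ) : (areaJoin u v).length = u.length + v.length + 1 := by
  simp [areaJoin]

lemma isAreaSeq_areaJoin_iff {u v : List ℕ} (hv : v.headI = 0) :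
    IsAreaSeq (areaJoin u v) ↔ IsAreaSeq u ∧ IsAreaSeq v := by
  have hv_head : ∀ y ∈ v.head?, y = 0 := by cases v <;> simp_all
  have hjunction : ∀ x ∈ (u.map (· + 1)).getLast?, ∀ y ∈ v.head?, y ≤ x + 1 := by
    intro x _ y hy
    simp [hv_head y hy]
  simp only [isAreaSeq_iff_isChain, areaJoin, List.headI_cons, List.isChain_cons,
    List.isChain_append, List.isChain_map, Nat.add_le_add_iff_right, hv, true_and]
  cases u with
  | nil => simp_all
  | cons a u =>
    simp only [List.map_cons, List.cons_append, List.head?_cons, Option.mem_def,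
      Option.some.injEq, forall_eq', List.headI_cons]
    exact ⟨fun ⟨h0, hu, hv, _⟩ => ⟨⟨by omega, hu⟩, hv⟩,
      fun ⟨⟨h0, hu⟩, hv⟩ => ⟨by omega, hu, hv, hjunction⟩⟩

lemma map_succ_append_inj {u u' v v' : List ℕ} (hv : v.headI = 0) (hv' : v'.headI = 0)
    (h : u.map (· + 1) ++ v = u'.map (· + 1) ++ v') : u = u' ∧ v = v' := by
  induction u generalizing u' with
  | nil => cases u' <;> simp_all
  | cons a u ih =>
    cases u' with
    | nil => subst h; simp at hv'
    | cons a' u' =>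
      simp only [List.map_cons, List.cons_append, List.cons.injEq, Nat.add_right_cancel_iff] at h
      simpa [h.1] using ih h.2

lemma exists_map_succ_append (t : List ℕ) :
    ∃ u v : List ℕ, v.headI = 0 ∧ t = u.map (· + 1) ++ v := by
  induction t with
  | nil => exact ⟨[], [], rfl, rfl⟩
  | cons a t ih =>
    obtain ⟨u, v, hv, rfl⟩ := ih
    cases a with
    | zero => exact ⟨[], 0 :: (u.map (· + 1) ++ v), rfl, rfl⟩
    | succ a => exact ⟨a :: u, v, hv, rfl⟩

lemma areaJoin_inj {u u' v v' : List ℕ} (hv : IsAreaSeq v) (hv' : IsAreaSeq v') :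
    areaJoin u v = areaJoin u' v' ↔ u = u' ∧ v = v' := by
  refine ⟨fun h => map_succ_append_inj hv.headI_eq_zero hv'.headI_eq_zero (List.cons_injective h),
    ?_⟩
  rintro ⟨rfl, rfl⟩
  rfl

lemma exists_areaJoin_eq {w : List ℕ} (hw : IsAreaSeq w) (hne : w ≠ []) :
    ∃ u v, IsAreaSeq u ∧ IsAreaSeq v ∧ areaJoin u v = w := by
  obtain ⟨a, t, rfl⟩ := List.exists_cons_of_ne_nil hne
  obtain rfl : a = 0 := hw.headI_eq_zero
  obtain ⟨u, v, hv, rfl⟩ := exists_map_succ_append t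
  obtain ⟨hu, hv⟩ := (isAreaSeq_areaJoin_iff hv).1 hw
  exact ⟨u, v, hu, hv, rfl⟩

def areaJoinSigma (n : ℕ) (x : Σ i : Fin (n + 1), AreaSeq i × AreaSeq (n - i)) :
    AreaSeq (n + 1) :=
  ⟨areaJoin x.2.1 x.2.2,
    (isAreaSeq_areaJoin_iff x.2.2.2.1.headI_eq_zero).2 ⟨x.2.1.2.1, x.2.2.2.1⟩,
    by rw [length_areaJoin, x.2.1.2.2, x.2.2.2.2]; omega⟩

lemma areaJoinSigma_bijective (n : ℕ) : Function.Bijective (areaJoinSigma n) := by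
  constructor
  · rintro ⟨i, ⟨u, hu, hui⟩, ⟨v, hv, hvi⟩⟩ ⟨j, ⟨u', hu', huj⟩, ⟨v', hv', hvj⟩⟩ h
    obtain ⟨rfl, rfl⟩ := (areaJoin_inj hv hv').1 (congrArg Subtype.val h)
    obtain rfl : i = j := Fin.ext (hui.symm.trans huj)
    rfl
  · rintro ⟨w, hw, hlen⟩
    obtain ⟨u, v, hu, hv, rfl⟩ := exists_areaJoin_eq hw (by rintro rfl; simp at hlen)
    rw [length_areaJoin] at hlen
    exact ⟨⟨⟨u.length, by omega⟩, ⟨u, hu, rfl⟩, ⟨v, hv, by simp; omega⟩⟩, rfl⟩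

lemma catalan_ne_zero (n : ℕ) : catalan n ≠ 0 :=
  right_ne_zero_of_mul ((succ_mul_catalan_eq_centralBinom n).symm ▸ n.centralBinom_ne_zero)

lemma card_areaSeq (n : ℕ) : Nat.card (AreaSeq n) = catalan n := by
  induction n using Nat.strong_induction_on with
  | _ n ih =>
  cases n with
  | zero =>
    rw [catalan_zero, Nat.card_eq_one_iff_exists]
    refine ⟨⟨[], by simp [IsAreaSeq]⟩, fun ⟨w, _, hw⟩ => ?_⟩
    simpa using hw
  | succ n =>
    -- `Nat.card_sigma` needs the pieces to be finite, which follows from their positive cardinality.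
    have (i : Fin (n + 1)) : Finite (AreaSeq i × AreaSeq (n - i)) := by
      have := Nat.finite_of_card_ne_zero ((ih i (by omega)).symm ▸ catalan_ne_zero i)
      have := Nat.finite_of_card_ne_zero ((ih (n - i) (by omega)).symm ▸ catalan_ne_zero (n - i))
      infer_instance
    rw [← Nat.card_eq_of_bijective _ (areaJoinSigma_bijective n), Nat.card_sigma, catalan_succ]
    refine Finset.sum_congr rfl fun i _ => ?_
    rw [Nat.card_prod, ih i (by omega), ih (n - i) (by omega)]

/-- The number of area sequences of size `n` equals the Catalan number
`C_n = (1/(n+1)) * binomial(2n, n)`. -/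
theorem areaSeq_card_eq_catalan (n : ℕ) :
    Nat.card {w : List ℕ // IsAreaSeq w ∧ w.length = n} =
      (2 * n).choose n / (n + 1) := by
  rw [card_areaSeq, catalan_eq_centralBinom_div, Nat.centralBinom_eq_two_mul_choose]
end

section
/- Let w be an area sequence and let c_0, c_1, …, c_k be its admissible insertion positions taken in admissible order. Then for every 0 ≤ i ≤ k, dinv(ins_{c_i}(w)) = dinv(w) + i. -/
/-!
Writing `dinv` as a sum over letters of the number of later letters equal to it or one
smaller, inserting a letter `x` after position `c` adds the earlier letters equal to `x` or
`x + 1` and the later letters equal to `x` or `x - 1`. Let `m` be the maximal letter.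
Inserting `m + 1` after a maximal letter gains exactly the maximal letters after it.
Inserting `m` after a position of `Maxa` gains every maximal letter (all of them lie before
it) and the positions of `Maxa` after it. Inserting `m` just before the last run of maxima
(the area condition makes the inserted letter `m` there) gains every maximal letter and
every position of `Maxa`, since the letters `m - 1` after that point are exactly `Maxa`.
Finally, a finset has exactly `i` elements above its `i`-th largest element.
-/

open Finset

def DinvPair (earlier later : ℕ) : Prop := later = earlier ∨ later + 1 = earlier

instance : DecidableRel DinvPair := fun _ _ => inferInstanceAs (Decidable (_ ∨ _))

lemma get1_cons_add_one (a : ℕ) (t : List ℕ) {j : ℕ} (hj : 1 ≤ j) :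
    get1 (a :: t) (j + 1) = get1 t j := by
  obtain ⟨k, rfl⟩ := Nat.exists_eq_add_of_le' hj
  rfl

lemma get1_take {w : List ℕ} {c j : ℕ} (hj : 1 ≤ j) (hjc : j ≤ c) :
    get1 (w.take c) j = get1 w j := by
  simp only [get1, List.getD_eq_getElem?_getD, List.getElem?_take,
    if_pos (show j - 1 < c by omega)]

lemma get1_drop (w : List ℕ) (c : ℕ) {j : ℕ} (hj : 1 ≤ j) :
    get1 (w.drop c) j = get1 w (c + j) := by
  simp only [get1, List.getD_eq_getElem?_getD, List.getElem?_drop]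
  congr 3
  omega

lemma card_filter_get1 (p : ℕ → Prop) [DecidablePred p] (l : List ℕ) :
    #{j ∈ Icc 1 l.length | p (get1 l j)} = l.countP p := by
  induction l with
  | nil => rfl
  | cons a t ih =>
    rw [card_filter] at ih ⊢
    rw [List.length_cons, ← insert_Icc_add_one_left_eq_Icc (by omega), ← map_add_right_Icc,
      sum_insert (by simp), sum_map, List.countP_cons, ← ih, add_comm]
    congr 1
    · exact sum_congr rfl fun j hj => by
        rw [addRightEmbedding_apply, get1_cons_add_one a t (mem_Icc.mp hj).1]
    · simp [get1]

lemma card_filter_Icc_get1 (p : ℕ → Prop) [DecidablePred p] {w : List ℕ} {c : ℕ}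
    (hc : c ≤ w.length) : #{j ∈ Icc 1 c | p (get1 w j)} = (w.take c).countP p := by
  rw [← card_filter_get1, List.length_take, min_eq_left hc]
  exact congrArg card <| filter_congr fun j hj => by
    rw [get1_take (mem_Icc.mp hj).1 (mem_Icc.mp hj).2]

lemma card_filter_Ioc_get1 (p : ℕ → Prop) [DecidablePred p] (w : List ℕ) (c : ℕ) :
    #{j ∈ Ioc c w.length | p (get1 w j)} = (w.drop c).countP p := by
  rcases le_total c w.length with hc | hc
  · have hIoc : Ioc c w.length = (Icc 1 (w.length - c)).map (addLeftEmbedding c) := by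
      rw [map_add_left_Icc, ← Icc_add_one_left_eq_Ioc, add_comm, Nat.add_sub_cancel' hc]
    rw [hIoc, filter_map, card_map, ← card_filter_get1, List.length_drop]
    exact congrArg card <| filter_congr fun j hj => by
      simp [get1_drop w c (mem_Icc.mp hj).1]
  · simp [Ioc_eq_empty_of_le hc, List.drop_eq_nil_of_le hc]

lemma dinv_eq_sum_countP (w : List ℕ) :
    dinv w = ∑ i ∈ Icc 1 w.length, (w.drop i).countP (DinvPair (get1 w i)) :=
  sum_congr rfl fun i _ => card_filter_Ioc_get1 (DinvPair (get1 w i)) w i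

lemma dinv_cons (a : ℕ) (t : List ℕ) : dinv (a :: t) = t.countP (DinvPair a) + dinv t := by
  rw [dinv_eq_sum_countP, dinv_eq_sum_countP, List.length_cons,
    ← insert_Icc_add_one_left_eq_Icc (by omega), ← map_add_right_Icc,
    sum_insert (by simp), sum_map]
  congr 1
  exact sum_congr rfl fun j hj => by
    rw [addRightEmbedding_apply, get1_cons_add_one a t (mem_Icc.mp hj).1, List.drop_succ_cons]

lemma dinv_append_cons (l₁ l₂ : List ℕ) (x : ℕ) :
    dinv (l₁ ++ x :: l₂) = dinv (l₁ ++ l₂)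
      + l₁.countP (fun a => DinvPair a x) + l₂.countP (DinvPair x) := by
  induction l₁ with
  | nil => simp [dinv_cons]; omega
  | cons a t ih =>
    simp only [List.cons_append, dinv_cons, List.countP_append, List.countP_cons, ih]
    by_cases h : DinvPair a x <;> simp [h] <;> omega

lemma dinv_take_append_cons_drop {w : List ℕ} {c : ℕ} (hc : c ≤ w.length) (x : ℕ) :
    dinv (w.take c ++ x :: w.drop c) = dinv w + #{j ∈ Icc 1 c | DinvPair (get1 w j) x}
      + #{j ∈ Ioc c w.length | DinvPair x (get1 w j)} := by
  rw [dinv_append_cons, List.take_append_drop, card_filter_Icc_get1 (fun a => DinvPair a x) hc,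
    card_filter_Ioc_get1 (DinvPair x)]

def insLetter (w : List ℕ) (c : ℕ) : ℕ := if c = 0 then 0 else get1 w c + 1

lemma ins_eq_take_append_cons_drop (w : List ℕ) (c : ℕ) :
    ins w c = w.take c ++ insLetter w c :: w.drop c := rfl

lemma le_maxVal_of_mem {w : List ℕ} {b : ℕ} (hb : b ∈ w) : b ≤ maxVal w :=
  List.le_max_of_le' 0 hb le_rfl

lemma get1_le_maxVal (w : List ℕ) (j : ℕ) : get1 w j ≤ maxVal w := by
  rw [get1, List.getD_eq_getElem?_getD]
  cases h : w[j - 1]? with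
  | none => exact Nat.zero_le _
  | some b => exact le_maxVal_of_mem (List.mem_of_getElem? h)

lemma exists_get1_eq_maxVal {w : List ℕ} (hw : w ≠ []) :
    ∃ k, 1 ≤ k ∧ k ≤ w.length ∧ get1 w k = maxVal w := by
  obtain ⟨k, hk, hkw⟩ :=
    List.mem_iff_getElem.mp (List.maximum_mem (List.foldr_max_of_ne_nil hw).symm)
  exact ⟨k + 1, by omega, by omega, by simp [get1, hk, hkw, maxVal]⟩

lemma getD_reverse_sort_eq_orderEmbOfFin {α : Type*} [LinearOrder α] (s : Finset α) (d : α)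
    {i : ℕ} (hi : i < #s) :
    (s.sort (· ≤ ·)).reverse.getD i d = s.orderEmbOfFin rfl ⟨#s - 1 - i, by omega⟩ := by
  rw [orderEmbOfFin_apply, List.getD_eq_getElem _ _ (by simpa using hi), List.getElem_reverse]
  simp

lemma getD_reverse_sort_mem {α : Type*} [LinearOrder α] (s : Finset α) (d : α)
    {i : ℕ} (hi : i < #s) : (s.sort (· ≤ ·)).reverse.getD i d ∈ s := by
  rw [getD_reverse_sort_eq_orderEmbOfFin s d hi]
  exact orderEmbOfFin_mem s rfl _

lemma card_filter_getD_reverse_sort_lt {α : Type*} [LinearOrder α] (s : Finset α) (d : α)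
    {i : ℕ} (hi : i < #s) : #{b ∈ s | (s.sort (· ≤ ·)).reverse.getD i d < b} = i := by
  rw [getD_reverse_sort_eq_orderEmbOfFin s d hi]
  set f := s.orderEmbOfFin rfl
  calc #{b ∈ s | f ⟨#s - 1 - i, _⟩ < b}
      = #{b ∈ univ.map f.toEmbedding | f ⟨#s - 1 - i, _⟩ < b} := by
        rw [map_orderEmbOfFin_univ]
    _ = i := by
      rw [filter_map, card_map]
      simp only [Function.comp_def, RelEmbedding.coe_toEmbedding, OrderEmbedding.lt_iff_lt,
        filter_lt_eq_Ioi, Fin.card_Ioi]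
      omega

lemma exists_run_start_between {P : ℕ → Prop} {j k : ℕ} (hjk : j < k) (hj : ¬ P j)
    (hk : P k) : ∃ p, j < p ∧ p ≤ k ∧ P p ∧ ¬ P (p - 1) := by
  induction k with
  | zero => omega
  | succ k ih =>
    by_cases hPk : P k
    · have hjk' : j < k := lt_of_le_of_ne (by omega) fun h => hj (h ▸ hPk)
      obtain ⟨p, hjp, hpk, hp, hp'⟩ := ih hjk' hPk
      exact ⟨p, hjp, by omega, hp, hp'⟩
    · exact ⟨k + 1, hjk, le_rfl, hk, hPk⟩

lemma le_i0 {w : List ℕ} {p : ℕ} (hp1 : 1 ≤ p) (hpn : p ≤ w.length)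
    (hpm : get1 w p = maxVal w) (hstart : p = 1 ∨ get1 w (p - 1) ≠ maxVal w) : p ≤ i0 w :=
  le_sup (f := id) (mem_filter.mpr ⟨mem_Icc.mpr ⟨hp1, hpn⟩, hpm, hstart⟩)

lemma i0_spec {w : List ℕ} (hw : w ≠ []) :
    1 ≤ i0 w ∧ i0 w ≤ w.length ∧ get1 w (i0 w) = maxVal w ∧
      (i0 w = 1 ∨ get1 w (i0 w - 1) ≠ maxVal w) := by
  obtain ⟨k, hk1, hkn, hkm⟩ := exists_get1_eq_maxVal hw
  -- `get1 w 0` is the junk value `get1 w 1`, hence the guard `1 ≤ p`.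
  obtain ⟨p, hp0, hpk, ⟨hp1, hpm⟩, hstart⟩ := exists_run_start_between
    (P := fun p => 1 ≤ p ∧ get1 w p = maxVal w) (j := 0) hk1 (by omega) ⟨hk1, hkm⟩
  obtain ⟨q, hq, hsup⟩ := exists_mem_eq_sup {i ∈ Icc 1 w.length |
      get1 w i = maxVal w ∧ (i = 1 ∨ get1 w (i - 1) ≠ maxVal w)}
    ⟨p, mem_filter.mpr ⟨mem_Icc.mpr ⟨hp1, by omega⟩, hpm, by omega⟩⟩ id
  simp only [mem_filter, mem_Icc] at hq
  rw [i0, hsup]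
  exact ⟨hq.1.1, hq.1.2, hq.2⟩

lemma lt_i0_of_get1_ne_maxVal {w : List ℕ} {j k : ℕ} (hjk : j < k) (hkn : k ≤ w.length)
    (hj : get1 w j ≠ maxVal w) (hk : get1 w k = maxVal w) : j < i0 w := by
  obtain ⟨p, hjp, hpk, hpm, hstart⟩ :=
    exists_run_start_between (P := (get1 w · = maxVal w)) hjk hj hk
  exact hjp.trans_le (le_i0 (by omega) (by omega) hpm (Or.inr hstart))

lemma dinv_ins_of_mem_Maxb {w : List ℕ} {c : ℕ} (hc : c ∈ Maxb w) :
    dinv (ins w c) = dinv w + #{b ∈ Maxb w | c < b} := by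
  obtain ⟨⟨hc1, hcn⟩, hcm⟩ := by simpa only [Maxb, mem_filter, mem_Icc] using hc
  rw [ins_eq_take_append_cons_drop, insLetter, if_neg (by omega), hcm,
    dinv_take_append_cons_drop hcn]
  have hleft : #{j ∈ Icc 1 c | DinvPair (get1 w j) (maxVal w + 1)} = 0 := by
    rw [card_eq_zero, filter_eq_empty_iff]
    intro j _
    have := get1_le_maxVal w j
    simp only [DinvPair]
    omega
  have hright : {j ∈ Ioc c w.length | DinvPair (maxVal w + 1) (get1 w j)}
      = {b ∈ Maxb w | c < b} := by
    ext j
    have := get1_le_maxVal w j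
    simp only [Maxb, mem_filter, mem_Ioc, mem_Icc]
    unfold DinvPair
    omega
  rw [hleft, hright, add_zero]

lemma dinv_ins_of_mem_Maxa {w : List ℕ} {c : ℕ} (hc : c ∈ Maxa w) :
    dinv (ins w c) = dinv w + #(Maxb w) + #{b ∈ Maxa w | c < b} := by
  obtain ⟨⟨hc1, hcn⟩, hcm, hafter⟩ := by simpa only [Maxa, mem_filter, mem_Icc] using hc
  rw [ins_eq_take_append_cons_drop, insLetter, if_neg (by omega), hcm,
    dinv_take_append_cons_drop hcn]
  have hleft : {j ∈ Icc 1 c | DinvPair (get1 w j) (maxVal w)} = Maxb w := by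
    ext j
    have hjm := get1_le_maxVal w j
    have hj := hafter j
    simp only [mem_Ioc] at hj
    simp only [Maxb, mem_filter, mem_Icc]
    unfold DinvPair
    omega
  have hright : {j ∈ Ioc c w.length | DinvPair (maxVal w) (get1 w j)}
      = {b ∈ Maxa w | c < b} := by
    ext j
    have := get1_le_maxVal w j
    simp only [Maxa, mem_filter, mem_Ioc, mem_Icc]
    unfold DinvPair
    constructor
    · rintro ⟨⟨hcj, hjn⟩, hjm⟩
      have := hafter j (mem_Ioc.mpr ⟨hcj, hjn⟩)
      refine ⟨⟨⟨by omega, hjn⟩, by omega, fun k hk => ?_⟩, hcj⟩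
      exact hafter k (mem_Ioc.mpr ⟨hcj.trans hk.1, hk.2⟩)
    · rintro ⟨⟨⟨-, hjn⟩, hjm, -⟩, hcj⟩
      exact ⟨⟨hcj, hjn⟩, by omega⟩
  rw [hleft, hright]

lemma insLetter_i0_sub_one {w : List ℕ} (hw : IsAreaSeq w) (hne : w ≠ []) :
    insLetter w (i0 w - 1) = maxVal w := by
  obtain ⟨h1, hn, hm, hstart⟩ := i0_spec hne
  rw [insLetter]
  split_ifs with hc0
  · rw [← hm, show i0 w = 1 by omega, hw.1 hne]
  · have hstep := hw.2 (i0 w - 1) (by omega) (by omega)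
    rw [Nat.sub_add_cancel h1, hm] at hstep
    have := get1_le_maxVal w (i0 w - 1)
    omega

lemma dinv_ins_i0_sub_one {w : List ℕ} (hw : IsAreaSeq w) (hne : w ≠ []) :
    dinv (ins w (i0 w - 1)) = dinv w + #(Maxb w) + #(Maxa w) := by
  obtain ⟨h1, hn, hm, -⟩ := i0_spec hne
  rw [ins_eq_take_append_cons_drop, insLetter_i0_sub_one hw hne,
    dinv_take_append_cons_drop (by omega)]
  set c := i0 w - 1
  have hleft : {j ∈ Icc 1 c | DinvPair (get1 w j) (maxVal w)} = {b ∈ Maxb w | b ≤ c} := by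
    ext j
    have := get1_le_maxVal w j
    simp only [Maxb, mem_filter, mem_Icc]
    unfold DinvPair
    omega
  have hsplit : {j ∈ Ioc c w.length | DinvPair (maxVal w) (get1 w j)}
      = {b ∈ Maxb w | ¬ b ≤ c} ∪ {j ∈ Ioc c w.length | get1 w j + 1 = maxVal w} := by
    ext j
    simp only [Maxb, mem_union, mem_filter, mem_Ioc, mem_Icc]
    unfold DinvPair
    omega
  have hMaxa : {j ∈ Ioc c w.length | get1 w j + 1 = maxVal w} = Maxa w := by
    ext j
    simp only [Maxa, mem_filter, mem_Ioc, mem_Icc]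
    constructor
    · rintro ⟨⟨hcj, hjn⟩, hjm⟩
      refine ⟨⟨by omega, hjn⟩, hjm, fun k hk => ?_⟩
      have := get1_le_maxVal w k
      have := mt (lt_i0_of_get1_ne_maxVal hk.1 hk.2 (by omega))
      omega
    · rintro ⟨⟨-, hjn⟩, hjm, hafter⟩
      have := hafter (i0 w)
      exact ⟨⟨by omega, hjn⟩, hjm⟩
  have hdisj : Disjoint {b ∈ Maxb w | ¬ b ≤ c} (Maxa w) := by
    rw [← hMaxa, disjoint_left]
    simp only [Maxb, mem_filter, mem_Ioc]
    omega
  rw [hleft, hsplit, hMaxa, card_union_of_disjoint hdisj, ← add_assoc,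
    add_assoc (dinv w), card_filter_add_card_filter_not]

/-- If `c_0, …, c_k` are the admissible insertion positions of an area sequence
`w` taken in admissible order, then inserting at `c_i` increases the dinv by
exactly `i`. -/
theorem dinv_ins_admissible (w : List ℕ) (hw : IsAreaSeq w)
    (i : ℕ) (hi : i < (admissible w).length) :
    dinv (ins w ((admissible w).getD i 0)) = dinv w + i := by
  rcases eq_or_ne w [] with rfl | hne
  · obtain rfl : i = 0 := by simpa [admissible] using hi
    simp [admissible, ins, dinv]
  rw [admissible, if_neg hne] at hi ⊢
  simp only [List.length_append, List.length_reverse, length_sort, List.length_singleton] at hi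
  rcases lt_or_ge i #(Maxb w) with hiB | hiB
  · rw [List.getD_append _ _ _ _ (by simp; omega), List.getD_append _ _ _ _ (by simpa),
      dinv_ins_of_mem_Maxb (getD_reverse_sort_mem _ _ hiB),
      card_filter_getD_reverse_sort_lt _ _ hiB]
  rcases lt_or_ge i (#(Maxb w) + #(Maxa w)) with hiA | hiA
  · have hiA' : i - #(Maxb w) < #(Maxa w) := by omega
    rw [List.getD_append _ _ _ _ (by simp; omega), List.getD_append_right _ _ _ _ (by simpa),
      List.length_reverse, length_sort, dinv_ins_of_mem_Maxa (getD_reverse_sort_mem _ _ hiA'),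
      card_filter_getD_reverse_sort_lt _ _ hiA']
    omega
  · obtain rfl : i = #(Maxb w) + #(Maxa w) := by omega
    rw [List.getD_append_right _ _ _ _ (by simp)]
    simp [dinv_ins_i0_sub_one hw hne, add_assoc]
end

section
/- Let w be a nonempty area sequence with maximum value m and let c be a position with w_c = m. Then dinv(ins_c(w)) = dinv(w) + #{ j > c : w_j = m }, the maximum value of ins_c(w) is m + 1, and position c + 1 is the unique position of ins_c(w) carrying the value m + 1. -/

lemma length_ins (w : List ℕ) (c : ℕ) (hc : c ≤ w.length) : (ins w c).length = w.length + 1 := by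
  simp [ins]; omega

lemma le_maxVal (w : List ℕ) (i : ℕ) : get1 w i ≤ maxVal w := by
  unfold get1 maxVal
  induction w generalizing i with
  | nil => simp
  | cons a t ih =>
    rcases Nat.eq_zero_or_pos (i-1) with h | h
    · simp [h, List.getD]
    · obtain ⟨k, hk⟩ : ∃ k, i - 1 = k + 1 := ⟨i-2, by omega⟩
      rw [hk]
      simp only [List.getD_cons_succ, List.foldr_cons]
      exact le_trans (by simpa [List.getD] using ih (k+1)) (le_max_right _ _)

lemma get1_ins_of_le (w : List ℕ) (c j : ℕ) (hc : c ≤ w.length) (hj1 : 1 ≤ j) (hj : j ≤ c) :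
    get1 (ins w c) j = get1 w j := by
  unfold get1 ins
  rw [List.getD_append _ _ _ _ (by simp; omega)]
  rw [List.getD_eq_getElem?_getD, List.getElem?_take, if_pos (by omega),
    ← List.getD_eq_getElem?_getD]

lemma get1_ins_self (w : List ℕ) (c : ℕ) (hc1 : 1 ≤ c) (hc : c ≤ w.length) :
    get1 (ins w c) (c + 1) = get1 w c + 1 := by
  unfold get1 ins
  have h : c + 1 - 1 = (w.take c).length := by simp; omega
  rw [h, List.getD_append_right _ _ _ _ (le_refl _), Nat.sub_self]
  simp [if_neg (by omega : ¬ c = 0), get1]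

lemma get1_ins_of_gt (w : List ℕ) (c j : ℕ) (hc : c ≤ w.length) (hj : c + 2 ≤ j) :
    get1 (ins w c) j = get1 w (j - 1) := by
  unfold get1 ins
  have hlen : (w.take c).length = c := by simp; omega
  rw [List.getD_append_right _ _ _ _ (by omega)]
  rw [hlen]
  have : j - 1 - c = (j - c - 2) + 1 := by omega
  rw [this, List.getD_cons_succ]
  rw [List.getD_eq_getElem?_getD, List.getElem?_drop, ← List.getD_eq_getElem?_getD]
  congr 1; omega

lemma maxVal_ins (w : List ℕ) (c : ℕ) (hc1 : 1 ≤ c) (hc : c ≤ w.length)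
    (hcm : get1 w c = maxVal w) : maxVal (ins w c) = maxVal w + 1 := by
  have hperm : (ins w c).Perm ((get1 w c + 1) :: w) := by
    unfold ins; rw [if_neg (by omega)]
    have := List.perm_middle (a := get1 w c + 1) (l₁ := w.take c) (l₂ := w.drop c)
    simpa [List.take_append_drop] using this
  have h2 : maxVal (ins w c) = maxVal ((get1 w c + 1) :: w) := hperm.foldr_op_eq
  rw [h2]
  show max (get1 w c + 1) (maxVal w) = maxVal w + 1
  rw [hcm]; omega

theorem dinv_part (w : List ℕ) (c : ℕ) (hc1 : 1 ≤ c) (hc2 : c ≤ w.length)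
    (hcm : get1 w c = maxVal w) :
    dinv (ins w c) = dinv w +
        ((Finset.Ioc c w.length).filter (fun j => get1 w j = maxVal w)).card := by
  set n := w.length with hn
  set m := maxVal w with hm
  have hlen : (ins w c).length = n + 1 := length_ins w c hc2
  have hA : ∀ j, 1 ≤ j → j ≤ c → get1 (ins w c) j = get1 w j :=
    fun j h1 h2 => get1_ins_of_le w c j hc2 h1 h2
  have hB : get1 (ins w c) (c+1) = m + 1 := by rw [get1_ins_self w c hc1 hc2, hcm]
  have hC : ∀ j, c + 2 ≤ j → get1 (ins w c) j = get1 w (j-1) :=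
    fun j h => get1_ins_of_gt w c j hc2 h
  have hD : ∀ j, get1 w j ≤ m := fun j => le_maxVal w j
  have hσinj : Function.Injective (fun i => if i ≤ c then i else i + 1) := by
    intro a b hab; simp only at hab; split_ifs at hab <;> omega
  have hσval : ∀ i, 1 ≤ i → get1 (ins w c) (if i ≤ c then i else i + 1) = get1 w i := by
    intro i h1
    split_ifs with h
    · exact hA i h1 h
    · rw [hC (i+1) (by omega)]; simp
  have hset : Finset.Icc 1 (n+1) =
      insert (c+1) ((Finset.Icc 1 n).image (fun i => if i ≤ c then i else i + 1)) := by
    ext j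
    simp only [Finset.mem_insert, Finset.mem_image, Finset.mem_Icc]
    constructor
    · intro hj
      rcases eq_or_ne j (c+1) with rfl | hne2
      · exact Or.inl rfl
      · right
        by_cases h : j ≤ c
        · exact ⟨j, by omega, if_pos h⟩
        · exact ⟨j - 1, by omega, by rw [if_neg (by omega)]; omega⟩
    · rintro (rfl | ⟨i, hi, rfl⟩)
      · omega
      · split_ifs <;> omega
  unfold dinv
  rw [hlen, ← hn, hset, Finset.sum_insert (by
      simp only [Finset.mem_image, Finset.mem_Icc]
      rintro ⟨i, hi, hσ⟩; split_ifs at hσ <;> omega),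
    Finset.sum_image (fun a _ b _ h => hσinj h)]
  have hnew : ((Finset.Ioc (c+1) (n+1)).filter (fun j =>
        get1 (ins w c) j = get1 (ins w c) (c+1) ∨
        get1 (ins w c) j + 1 = get1 (ins w c) (c+1))).card
      = ((Finset.Ioc c n).filter (fun j => get1 w j = m)).card := by
    rw [hB]
    have hseq : ((Finset.Ioc (c+1) (n+1)).filter (fun j =>
          get1 (ins w c) j = m + 1 ∨ get1 (ins w c) j + 1 = m + 1))
        = ((Finset.Ioc c n).filter (fun j => get1 w j = m)).image (· + 1) := by
      ext j
      simp only [Finset.mem_filter, Finset.mem_image, Finset.mem_Ioc]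
      constructor
      · rintro ⟨⟨hj1, hj2⟩, hcond⟩
        have hgj : get1 (ins w c) j = get1 w (j-1) := hC j (by omega)
        have hle : get1 w (j-1) ≤ m := hD _
        rw [hgj] at hcond
        exact ⟨j - 1, ⟨⟨by omega, by omega⟩, by omega⟩, by omega⟩
      · rintro ⟨j', ⟨⟨hj1, hj2⟩, hval⟩, rfl⟩
        have hgj : get1 (ins w c) (j' + 1) = get1 w j' := by
          rw [hC (j'+1) (by omega)]; simp
        exact ⟨⟨by omega, by omega⟩, Or.inr (by omega)⟩
    rw [hseq, Finset.card_image_of_injective _ (fun a b => by omega)]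
  rw [hnew]
  have hsum : ∀ i ∈ Finset.Icc 1 n,
      ((Finset.Ioc (if i ≤ c then i else i + 1) (n+1)).filter (fun j =>
        get1 (ins w c) j = get1 (ins w c) (if i ≤ c then i else i + 1) ∨
        get1 (ins w c) j + 1 = get1 (ins w c) (if i ≤ c then i else i + 1))).card
      = ((Finset.Ioc i n).filter (fun j =>
          get1 w j = get1 w i ∨ get1 w j + 1 = get1 w i)).card := by
    intro i hi
    simp only [Finset.mem_Icc] at hi
    rw [hσval i hi.1]
    have hseq : ((Finset.Ioc (if i ≤ c then i else i + 1) (n+1)).filter (fun j =>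
          get1 (ins w c) j = get1 w i ∨ get1 (ins w c) j + 1 = get1 w i))
        = ((Finset.Ioc i n).filter (fun j =>
            get1 w j = get1 w i ∨ get1 w j + 1 = get1 w i)).image
          (fun j => if j ≤ c then j else j + 1) := by
      ext j
      simp only [Finset.mem_filter, Finset.mem_image, Finset.mem_Ioc]
      constructor
      · rintro ⟨⟨hj1, hj2⟩, hcond⟩
        have hσi1 : (if i ≤ c then i else i + 1) ≥ i := by split_ifs <;> omega
        have hji : i < j := by omega
        have hjne : j ≠ c + 1 := by
          rintro rfl
          rw [hB] at hcond
          have := hD i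
          omega
        by_cases hjc : j ≤ c
        · refine ⟨j, ⟨⟨hji, by omega⟩, ?_⟩, if_pos hjc⟩
          rwa [hA j (by omega) hjc] at hcond
        · have hj3 : c + 2 ≤ j := by omega
          have hσi2 : (if i ≤ c then i else i + 1) < j := by split_ifs at hj1 ⊢ <;> omega
          refine ⟨j - 1, ⟨⟨?_, by omega⟩, ?_⟩, by rw [if_neg (by omega)]; omega⟩
          · split_ifs at hj1 <;> omega
          · rwa [hC j hj3] at hcond
      · rintro ⟨j', ⟨⟨hj1, hj2⟩, hcond⟩, rfl⟩
        by_cases hjc : j' ≤ c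
        · rw [if_pos hjc]
          refine ⟨⟨?_, by omega⟩, by rwa [hA j' (by omega) hjc]⟩
          split_ifs <;> omega
        · rw [if_neg hjc]
          have : get1 (ins w c) (j' + 1) = get1 w j' := by
            rw [hC (j'+1) (by omega)]; simp
          refine ⟨⟨?_, by omega⟩, by rwa [this]⟩
          split_ifs <;> omega
    rw [hseq, Finset.card_image_of_injective _ hσinj]
  rw [Finset.sum_congr rfl hsum, Nat.add_comm]

/-- Inserting in a nonempty area sequence `w` at a position `c` carrying the
maximal value `m`: the dinv increases by the number of positions `j > c` with
`w_j = m`, the new maximal value is `m + 1`, and `c + 1` is the unique position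
of `ins w c` carrying the value `m + 1`. -/
theorem dinv_ins_at_max (w : List ℕ) (hw : IsAreaSeq w) (hne : w ≠ [])
    (c : ℕ) (hc1 : 1 ≤ c) (hc2 : c ≤ w.length) (hcm : get1 w c = maxVal w) :
    dinv (ins w c) = dinv w +
        ((Finset.Ioc c w.length).filter (fun j => get1 w j = maxVal w)).card ∧
      maxVal (ins w c) = maxVal w + 1 ∧
      ∀ j ∈ Finset.Icc 1 (ins w c).length,
        (get1 (ins w c) j = maxVal w + 1 ↔ j = c + 1) := by
  have hlen : (ins w c).length = w.length + 1 := length_ins w c hc2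
  refine ⟨dinv_part w c hc1 hc2 hcm, maxVal_ins w c hc1 hc2 hcm, ?_⟩
  intro j hj
  simp only [Finset.mem_Icc, hlen] at hj
  constructor
  · intro h
    by_contra hne2
    rcases le_or_gt j c with hcase | hcase
    · rw [get1_ins_of_le w c j hc2 hj.1 hcase] at h
      have := le_maxVal w j
      omega
    · rw [get1_ins_of_gt w c j hc2 (by omega)] at h
      have := le_maxVal w (j - 1)
      omega
  · rintro rfl
    rw [get1_ins_self w c hc1 hc2, hcm]
end
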